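/- arXiv:1409.6020 — 7 statements merged into one kernel-verified Lean document; each statement's English description precedes it below -/
import Mathlib

section
/- Let F be a finite field with q elements such that q is coprime to 3 and q is not congruent to 1 modulo 9. Then the number of pairs (x,y) ∈ F × F satisfying y³ = x⁴ − x equals q. -/
/-!
Write `N(c)` for the number of cube roots of `c`, so the curve has `∑ₓ N(x⁴ - x)` affine points.
In `F` every `c` has at most `gcd(k, q - 1)` `k`-th roots, while these counts sum to `q` over all
`c`. If `3 ∤ q - 1` this forces `N ≡ 1`. Otherwise take a primitive cube root of unity `ζ`.
As `(ζx)⁴ - ζx = ζ(x⁴ - x)`, the point count is unchanged when `x⁴ - x` is replaced by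
`ζʲ(x⁴ - x)`, so it is a third of `∑ₓ T(x⁴ - x)` with `T(c) = N(c) + N(ζc) + N(ζ²c)`. For
`c ≠ 0` the cube roots of `c, ζc, ζ²c` are distinct ninth roots of `c³`, so `T(c) ≤ gcd(9, q - 1)`,
which is `3` because `q ≢ 1 mod 9`; since `∑_c T(c) = 3q`, in fact `T ≡ 3`.
-/

open Finset

section PowFibres

variable {F : Type*} [Field F] [Fintype F] [DecidableEq F]

theorem card_filter_pow_eq_zero {k : ℕ} (hk : k ≠ 0) : #{y : F | y ^ k = 0} = 1 := by
  simp [pow_eq_zero_iff hk, filter_eq']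

theorem sum_card_filter_pow_eq (k : ℕ) : ∑ c : F, #{y : F | y ^ k = c} = Fintype.card F :=
  (card_eq_sum_card_fiberwise fun _ _ => mem_univ _).symm

theorem card_filter_pow_eq_le_gcd {k : ℕ} (hk : 0 < k) (c : F) :
    #{y : F | y ^ k = c} ≤ k.gcd (Fintype.card F - 1) := by
  set d := k.gcd (Fintype.card F - 1)
  rcases eq_or_ne c 0 with rfl | hc
  · rw [card_filter_pow_eq_zero hk.ne']
    exact Nat.gcd_pos_of_pos_left _ hk
  obtain hempty | ⟨y₀, hy₀⟩ := (filter (fun y : F => y ^ k = c) univ).eq_empty_or_nonempty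
  · simp [hempty]
  rw [mem_filter] at hy₀
  have hy₀0 : y₀ ≠ 0 := by
    rintro rfl
    exact hc (by simpa [zero_pow hk.ne'] using hy₀.2.symm)
  have hsub : filter (fun y : F => y ^ k = c) univ ⊆
      (Polynomial.nthRoots d (y₀ ^ d)).toFinset := by
    intro y hy
    rw [mem_filter] at hy
    have hy0 : y ≠ 0 := by
      rintro rfl
      exact hc (by simpa [zero_pow hk.ne'] using hy.2.symm)
    have hratio : (y / y₀) ^ d = 1 := pow_gcd_eq_one.mpr
      ⟨by rw [div_pow, hy.2, hy₀.2, div_self hc],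
        FiniteField.pow_card_sub_one_eq_one _ (div_ne_zero hy0 hy₀0)⟩
    rw [Multiset.mem_toFinset, Polynomial.mem_nthRoots (Nat.gcd_pos_of_pos_left _ hk)]
    rwa [div_pow, div_eq_one_iff_eq (pow_ne_zero _ hy₀0)] at hratio
  calc _ ≤ _ := card_le_card hsub
    _ ≤ _ := Multiset.toFinset_card_le _
    _ ≤ d := Polynomial.card_nthRoots _ _

theorem card_filter_pow_eq_of_coprime {k : ℕ} (hk : 0 < k)
    (hcop : k.Coprime (Fintype.card F - 1)) (c : F) : #{y : F | y ^ k = c} = 1 := by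
  have hle : ∀ c ∈ (univ : Finset F), #{y : F | y ^ k = c} ≤ 1 := fun c _ =>
    hcop ▸ card_filter_pow_eq_le_gcd hk c
  refine (sum_eq_sum_iff_of_le hle).mp ?_ c (mem_univ c)
  simp [sum_card_filter_pow_eq]

theorem sum_card_filter_pow_eq_root_mul_le {n : ℕ} (hn : 0 < n) {ζ : F}
    (hζ : IsPrimitiveRoot ζ n) {c : F} (hc : c ≠ 0) :
    ∑ j ∈ range n, #{y : F | y ^ n = ζ ^ j * c} ≤ (n ^ 2).gcd (Fintype.card F - 1) := by
  have hdisj : (range n : Set ℕ).PairwiseDisjoint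
      fun j => filter (fun y : F => y ^ n = ζ ^ j * c) univ := by
    intro i hi j hj hij
    refine disjoint_filter.mpr fun y _ hyi hyj => hij ?_
    exact hζ.pow_inj (mem_range.mp hi) (mem_range.mp hj)
      (mul_right_cancel₀ hc (hyi.symm.trans hyj))
  have hsub : (range n).biUnion (fun j => filter (fun y : F => y ^ n = ζ ^ j * c) univ) ⊆
      filter (fun y : F => y ^ (n ^ 2) = c ^ n) univ := by
    intro y hy
    obtain ⟨j, -, hy⟩ := mem_biUnion.mp hy
    simp only [mem_filter, mem_univ, true_and] at hy ⊢
    rw [sq, pow_mul, hy, mul_pow, ← pow_mul, mul_comm j, pow_mul, hζ.pow_eq_one, one_pow,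
      one_mul]
  rw [← card_biUnion hdisj]
  exact (card_le_card hsub).trans (card_filter_pow_eq_le_gcd (pow_pos hn 2) _)

theorem sum_card_filter_pow_eq_root_mul {n : ℕ} {ζ : F} (hζ : IsPrimitiveRoot ζ n)
    (hgcd : (n ^ 2).gcd (Fintype.card F - 1) = n) (c : F) :
    ∑ j ∈ range n, #{y : F | y ^ n = ζ ^ j * c} = n := by
  rcases n.eq_zero_or_pos with rfl | hn
  · simp
  have hle : ∀ c ∈ (univ : Finset F), ∑ j ∈ range n, #{y : F | y ^ n = ζ ^ j * c} ≤ n := by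
    intro c _
    rcases eq_or_ne c 0 with rfl | hc
    · simp only [mul_zero, card_filter_pow_eq_zero hn.ne', sum_const, card_range, smul_eq_mul,
        mul_one, le_refl]
    · exact (sum_card_filter_pow_eq_root_mul_le hn hζ hc).trans hgcd.le
  refine (sum_eq_sum_iff_of_le hle).mp ?_ c (mem_univ c)
  have hζj : ∀ j, ζ ^ j ≠ 0 := fun j => pow_ne_zero j (hζ.ne_zero hn.ne')
  calc ∑ c : F, ∑ j ∈ range n, #{y : F | y ^ n = ζ ^ j * c}
      = ∑ j ∈ range n, ∑ c : F, #{y : F | y ^ n = ζ ^ j * c} := sum_comm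
    _ = ∑ _j ∈ range n, Fintype.card F := sum_congr rfl fun j _ =>
      (Equiv.sum_comp (Equiv.mulLeft₀ _ (hζj j)) fun c => #{y : F | y ^ n = c}).trans
        (sum_card_filter_pow_eq n)
    _ = ∑ _c : F, n := by simp [mul_comm]

end PowFibres

theorem natCard_subtype_prod_eq_sum_card_filter {α β : Type*} [Fintype α] [Fintype β]
    (r : α → β → Prop) [∀ a b, Decidable (r a b)] :
    Nat.card {p : α × β // r p.1 p.2} = ∑ a, #{b | r a b} := by
  rw [Nat.card_eq_fintype_card, Fintype.card_congr (Equiv.subtypeProdEquivSigmaSubtype r),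
    Fintype.card_sigma]
  exact sum_congr rfl fun a _ => Fintype.card_subtype _

theorem exists_isPrimitiveRoot_of_dvd_card_sub_one (F : Type*) [Field F] [Fintype F] {p : ℕ}
    [Fact p.Prime] (hp : p ∣ Fintype.card F - 1) : ∃ ζ : F, IsPrimitiveRoot ζ p := by
  obtain ⟨u, hu⟩ := exists_prime_orderOf_dvd_card' (G := Fˣ) p
    (by rwa [Nat.card_units, Nat.card_eq_fintype_card])
  exact ⟨u, (orderOf_units.trans hu) ▸ IsPrimitiveRoot.orderOf (u : F)⟩

theorem sum_comp_mul_quartic_sub_self {F M : Type*} [Field F] [Fintype F] [AddCommMonoid M]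
    {ω : F} (hω : ω ^ 3 = 1) (g : F → M) :
    ∑ x : F, g (ω * (x ^ 4 - x)) = ∑ x : F, g (x ^ 4 - x) := by
  have hω0 : ω ≠ 0 := by
    rintro rfl
    norm_num at hω
  calc ∑ x : F, g (ω * (x ^ 4 - x)) = ∑ x : F, g ((ω * x) ^ 4 - ω * x) :=
        sum_congr rfl fun x _ => by congr 1; linear_combination (-ω * x ^ 4) * hω
    _ = ∑ x : F, g (x ^ 4 - x) :=
        Equiv.sum_comp (Equiv.mulLeft₀ ω hω0) fun x => g (x ^ 4 - x)

theorem gcd_three_sq_sub_one_eq_three {q : ℕ} (h1 : q % 3 = 1) (h9 : q % 9 ≠ 1) :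
    (3 ^ 2).gcd (q - 1) = 3 := by
  rw [Nat.gcd_rec]
  have : (q - 1) % 3 ^ 2 = 3 ∨ (q - 1) % 3 ^ 2 = 6 := by omega
  rcases this with h | h <;> rw [h] <;> rfl

theorem sum_card_filter_cube_eq_quartic_sub_self {F : Type*} [Field F] [Fintype F]
    [DecidableEq F] {ζ : F} (hζ : IsPrimitiveRoot ζ 3)
    (hgcd : (3 ^ 2).gcd (Fintype.card F - 1) = 3) :
    ∑ x : F, #{y : F | y ^ 3 = x ^ 4 - x} = Fintype.card F := by
  refine Nat.eq_of_mul_eq_mul_left (by norm_num : 0 < 3) ?_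
  calc 3 * ∑ x : F, #{y : F | y ^ 3 = x ^ 4 - x}
      = ∑ _j ∈ range 3, ∑ x : F, #{y : F | y ^ 3 = x ^ 4 - x} := by simp
    _ = ∑ j ∈ range 3, ∑ x : F, #{y : F | y ^ 3 = ζ ^ j * (x ^ 4 - x)} :=
        sum_congr rfl fun j _ => (sum_comp_mul_quartic_sub_self (ω := ζ ^ j)
          (by rw [← pow_mul, mul_comm, pow_mul, hζ.pow_eq_one, one_pow])
          fun c => #{y : F | y ^ 3 = c}).symm
    _ = ∑ _x : F, 3 := by
        rw [sum_comm]
        exact sum_congr rfl fun x _ => sum_card_filter_pow_eq_root_mul hζ hgcd _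
    _ = 3 * Fintype.card F := by simp [mul_comm]

/-- Let `F` be a finite field with `q` elements such that `q` is coprime to `3` and
`q` is not congruent to `1` modulo `9`. Then the number of pairs `(x, y) ∈ F × F`
satisfying `y³ = x⁴ − x` equals `q`. -/
theorem affine_point_count_of_not_one_mod_nine
    (F : Type*) [Field F] [Fintype F]
    (h3 : Nat.Coprime (Fintype.card F) 3)
    (h9 : Fintype.card F % 9 ≠ 1) :
    Nat.card {p : F × F // p.2 ^ 3 = p.1 ^ 4 - p.1} = Fintype.card F := by
  classical
  rw [natCard_subtype_prod_eq_sum_card_filter fun x y : F => y ^ 3 = x ^ 4 - x]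
  have hq : 1 < Fintype.card F := Fintype.one_lt_card
  have hq3 : ¬ 3 ∣ Fintype.card F := (Nat.Prime.coprime_iff_not_dvd Nat.prime_three).mp h3.symm
  by_cases h1 : Fintype.card F % 3 = 1
  · obtain ⟨ζ, hζ⟩ := exists_isPrimitiveRoot_of_dvd_card_sub_one F (p := 3) (by omega)
    exact sum_card_filter_cube_eq_quartic_sub_self hζ (gcd_three_sq_sub_one_eq_three h1 h9)
  · have hcop : Nat.Coprime 3 (Fintype.card F - 1) :=
      (Nat.Prime.coprime_iff_not_dvd Nat.prime_three).mpr (by omega)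
    simp [card_filter_pow_eq_of_coprime (by norm_num) hcop]
end

section
/- Let F be a finite field with q elements where q ≡ 1 (mod 9), let K = ℚ(ζ) be the 9th cyclotomic field where ζ is a primitive 9th root of unity, and let χ : F → K be a multiplicative character of exact order 9 (extended by χ(0) = 0). Then Tr_{K/ℚ}( Σ_{x∈F} χ(x)⁶ · χ(1−x) ) = Tr_{K/ℚ}( Σ_{x∈F} χ(x)³ · χ(1−x) ). -/
/-!
Write `J(χ, ψ) = ∑ₓ χ(x) ψ(1 - x)`. The automorphism `ζ ↦ ζ⁵` of `ℚ(ζ₉)` preserves the trace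
and sends `J(χ⁶, χ)` to `J(χ³⁰, χ⁵) = J(χ³, χ⁵)`. The substitution `x ↦ x⁻¹` gives
`J(χ, ψ) = ψ(-1) J((χψ)⁻¹, ψ)`, and `χ(-1) = 1` since `χ` has odd order; hence both
`J(χ³, χ⁵) = J(χ, χ⁵)` and `J(χ³, χ)` equal `J(χ⁵, χ)`.
-/

open Polynomial

lemma jacobiSum_pow_pow_eq_sum {F R : Type*} [CommRing F] [Fintype F] [CommRing R]
    (χ : MulChar F R) {a b : ℕ} (ha : a ≠ 0) (hb : b ≠ 0) :
    jacobiSum (χ ^ a) (χ ^ b) = ∑ x : F, χ x ^ a * χ (1 - x) ^ b := by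
  simp only [jacobiSum, χ.pow_apply' ha, χ.pow_apply' hb]

lemma jacobiSum_eq_apply_neg_one_mul_jacobiSum_inv_mul {F R : Type*} [Field F] [Fintype F]
    [CommRing R] (χ ψ : MulChar F R) :
    jacobiSum χ ψ = ψ (-1) * jacobiSum (χ * ψ)⁻¹ ψ := by
  rw [jacobiSum, jacobiSum, ← Equiv.sum_comp (Equiv.inv F), Finset.mul_sum]
  refine Finset.sum_congr rfl fun x _ ↦ ?_
  rcases eq_or_ne x 0 with rfl | hx
  · simp [MulChar.map_zero]
  · have hsub : (-1) * (x⁻¹ * (1 - x)) = 1 - x⁻¹ := by field_simp; ring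
    rw [Equiv.inv_apply, MulChar.inv_apply', MulChar.coeToFun_mul, Pi.mul_apply, ← hsub, map_mul,
      map_mul]
    ring

lemma MulChar.ringHomComp_eq_pow {F R : Type*} [CommRing F] [CommRing R] {χ : MulChar F R}
    {n : ℕ} (hχ : χ ^ n = 1) {f : R →+* R} {k : ℕ}
    (hf : ∀ y : R, y ^ n = 1 → f y = y ^ k) :
    χ.ringHomComp f = χ ^ k := by
  ext u
  rw [ringHomComp_apply, pow_apply_coe]
  exact hf _ (by rw [← pow_apply_coe, hχ, one_apply_coe])

lemma IsCyclotomicExtension.exists_algEquiv_apply_eq_pow {n : ℕ} [NeZero n] {K L : Type*}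
    [Field K] [Field L] [Algebra K L] [IsCyclotomicExtension {n} K L]
    (h : Irreducible (cyclotomic n K)) {k : ℕ} (hk : k.Coprime n) :
    ∃ σ : L ≃ₐ[K] L, ∀ y : L, y ^ n = 1 → σ y = y ^ k := by
  have hζ := zeta_spec n K L
  refine ⟨fromZetaAut (hζ.pow_of_coprime k hk) h, fun y hy ↦ ?_⟩
  obtain ⟨i, -, rfl⟩ := hζ.eq_pow_of_pow_eq_one hy
  rw [map_pow, fromZetaAut_spec, ← pow_mul, ← pow_mul, mul_comm]

theorem trace_jacobi_sum_six_one_eq_three_one_general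
    (F : Type*) [Field F] [Fintype F]
    (χ : MulChar F (CyclotomicField 9 ℚ)) (hχ : orderOf χ = 9) :
    Algebra.trace ℚ (CyclotomicField 9 ℚ) (∑ x : F, χ x ^ 6 * χ (1 - x))
      = Algebra.trace ℚ (CyclotomicField 9 ℚ) (∑ x : F, χ x ^ 3 * χ (1 - x)) := by
  have hχ9 : χ ^ 9 = 1 := (congrArg (χ ^ ·) hχ).symm.trans (pow_orderOf_eq_one χ)
  have : IsCyclotomicExtension {9} ℚ (CyclotomicField 9 ℚ) :=
    CyclotomicField.isCyclotomicExtension 9 ℚ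
  have hneg : χ (-1) = 1 := MulChar.val_neg_one_eq_one_of_odd_order (by decide) hχ9
  obtain ⟨σ, hσ⟩ := IsCyclotomicExtension.exists_algEquiv_apply_eq_pow (n := 9)
    (L := CyclotomicField 9 ℚ) (cyclotomic.irreducible_rat (by norm_num)) (k := 5) (by norm_num)
  have hσχ : χ.ringHomComp (σ.toRingEquiv : _ →+* _) = χ ^ 5 :=
    MulChar.ringHomComp_eq_pow hχ9 hσ
  have h30 : (χ ^ 5) ^ 6 = χ ^ 3 := by rw [← pow_mul, ← pow_mod_orderOf, hχ]
  have h35 : (χ ^ 3 * χ ^ 5)⁻¹ = χ :=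
    inv_eq_of_mul_eq_one_right (by rw [← pow_add, ← pow_succ, hχ9])
  have h31 : (χ ^ 3 * χ)⁻¹ = χ ^ 5 :=
    inv_eq_of_mul_eq_one_right (by rw [← pow_succ, ← pow_add, hχ9])
  have hJ : ∀ a ≠ 0, jacobiSum (χ ^ a) χ = ∑ x : F, χ x ^ a * χ (1 - x) := fun a ha ↦ by
    simpa only [pow_one] using jacobiSum_pow_pow_eq_sum χ ha one_ne_zero
  rw [← hJ 6 (by norm_num), ← hJ 3 (by norm_num), ← Algebra.trace_eq_of_algEquiv σ]
  congr 1
  calc σ (jacobiSum (χ ^ 6) χ)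
      = jacobiSum (χ ^ 3) (χ ^ 5) := by
        rw [← AlgEquiv.coe_ringEquiv, ← RingEquiv.coe_toRingHom, ← jacobiSum_ringHomComp,
          ← MulChar.ringHomComp_pow, hσχ, h30]
    _ = jacobiSum (χ ^ 5) χ := by
        rw [jacobiSum_eq_apply_neg_one_mul_jacobiSum_inv_mul, χ.pow_apply' (by norm_num), hneg,
          one_pow, one_mul, h35, jacobiSum_comm]
    _ = jacobiSum (χ ^ 3) χ := by
        rw [jacobiSum_eq_apply_neg_one_mul_jacobiSum_inv_mul (χ ^ 3), hneg, one_mul, h31]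

/-- Let `F` be a finite field with `q ≡ 1 (mod 9)`, let `K = ℚ(ζ)` be the 9th
cyclotomic field, and let `χ : F → K` be a multiplicative character of exact order 9
(with `χ 0 = 0`). Then `Tr_{K/ℚ}(J_{(6,1)}) = Tr_{K/ℚ}(J_{(3,1)})`. -/
theorem trace_jacobi_sum_six_one_eq_three_one
    (F : Type*) [Field F] [Fintype F]
    (h9 : Fintype.card F % 9 = 1)
    (χ : MulChar F (CyclotomicField 9 ℚ)) (hχ : orderOf χ = 9) :
    Algebra.trace ℚ (CyclotomicField 9 ℚ) (∑ x : F, χ x ^ 6 * χ (1 - x))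
      = Algebra.trace ℚ (CyclotomicField 9 ℚ) (∑ x : F, χ x ^ 3 * χ (1 - x)) :=
  trace_jacobi_sum_six_one_eq_three_one_general F χ hχ
end

section
/- Let γ be the 6×6 complex matrix with entries γ₁₃ = γ₂₄ = γ₃₅ = γ₄₆ = γ₆₁ = 1, γ₅₂ = −1, and all other entries 0. For all complex numbers u₁, u₂, u₃ of absolute value 1, the characteristic polynomial of D(u₁,u₂,u₃)·γ equals X⁶ + 1, and likewise the characteristic polynomial of D(u₁,u₂,u₃)·γ⁵ equals X⁶ + 1, where D(u₁,u₂,u₃) = diag(u₁, ū₁, u₂, ū₂, u₃, ū₃). -/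
/-!
`D·γ` and `D·γ⁵` are both weighted permutation matrices `diag(w)·P_σ` of a 6-cycle `σ`, with
weights multiplying to `-1` because `u ū = 1`. In the Leibniz expansion of `det (X - diag(w)·P_σ)`
a permutation `τ` contributes only if `τ i ∈ {i, σ⁻¹ i}` for every `i`; since `σ` is a single cycle
without fixed points this forces `τ = 1` or `τ = σ⁻¹`, and these two terms give `X ^ n - ∏ w`.
-/

open Matrix Polynomial

namespace Equiv.Perm

variable {α : Type*} [Fintype α] [DecidableEq α] {σ τ : Perm α}

theorem IsCycle.eq_one_or_eq_of_forall_apply_eq_self_or_eq (hσ : σ.IsCycle)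
    (hsupp : σ.support = Finset.univ) (h : ∀ x, τ x = x ∨ τ x = σ x) : τ = 1 ∨ τ = σ := by
  have hfix (x : α) : σ x ≠ x := mem_support.mp (hsupp ▸ Finset.mem_univ x)
  by_contra! hne
  obtain ⟨x, hx⟩ : ∃ x, τ x ≠ x := by
    by_contra! hx
    exact hne.1 (ext hx)
  have hstep (y : α) (hy : τ y = σ y) : τ (σ y) = σ (σ y) :=
    (h (σ y)).resolve_left fun h' => hfix y (τ.injective (h'.trans hy.symm))
  refine hne.2 (ext fun y => ?_)
  obtain ⟨i, -, rfl⟩ := (hσ.sameCycle (hfix x) (hfix y)).exists_pow_eq'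
  induction i with
  | zero => exact (h x).resolve_left hx
  | succ i ih => simpa only [pow_succ', mul_apply] using hstep _ ih

end Equiv.Perm

namespace Matrix

variable {n R : Type*} [Fintype n] [DecidableEq n]

theorem diagonal_mul_permMatrix_apply [NonAssocSemiring R] (w : n → R) (σ : Equiv.Perm n)
    (i j : n) : (diagonal w * σ.permMatrix R) i j = if σ i = j then w i else 0 := by
  simp [diagonal_mul, PEquiv.toMatrix_apply, eq_comm]

theorem charpoly_diagonal_mul_permMatrix_of_isCycle [CommRing R] (w : n → R)
    {σ : Equiv.Perm n} (hσ : σ.IsCycle) (hsupp : σ.support = Finset.univ) :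
    (diagonal w * σ.permMatrix R).charpoly = X ^ Fintype.card n - C (∏ i, w i) := by
  have hfix (x : n) : σ x ≠ x := Equiv.Perm.mem_support.mp (hsupp ▸ Finset.mem_univ x)
  rw [charpoly, det_apply, Fintype.sum_eq_add 1 σ⁻¹ (by simpa [eq_comm] using hσ.ne_one)]
  · have hone : ∏ i, charmatrix (diagonal w * σ.permMatrix R) i i = X ^ Fintype.card n := by
      simp [charmatrix_apply_eq, hfix]
    have hinv : ∏ i, charmatrix (diagonal w * σ.permMatrix R) (σ⁻¹ i) i =
        (-1) ^ Fintype.card n * C (∏ i, w i) :=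
      calc ∏ i, charmatrix (diagonal w * σ.permMatrix R) (σ⁻¹ i) i = ∏ i, -C (w (σ⁻¹ i)) := by
            refine Finset.prod_congr rfl fun i _ => ?_
            have hne : σ⁻¹ i ≠ i := fun h => hfix i (by simpa [eq_comm] using congrArg σ h)
            rw [charmatrix_apply_ne _ _ _ hne, diagonal_mul_permMatrix_apply, if_pos (by simp)]
        _ = ∏ i, -C (w i) := Equiv.prod_comp σ⁻¹ fun i => -C (w i)
        _ = _ := by rw [Finset.prod_neg, map_prod, Finset.card_univ]
    simp only [Equiv.Perm.coe_one, id_eq, Equiv.Perm.sign_one, one_smul, Equiv.Perm.sign_inv,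
      hone, hinv, hσ.sign, hsupp, Finset.card_univ, Units.smul_def, zsmul_eq_mul]
    push_cast
    rw [neg_mul, ← mul_assoc, ← mul_pow, neg_one_mul, neg_neg, one_pow, one_mul, ← sub_eq_add_neg]
  · rintro τ ⟨hτ₁, hτ₂⟩
    obtain ⟨i, hi₁, hi₂⟩ : ∃ i, τ i ≠ i ∧ τ i ≠ σ⁻¹ i := by
      by_contra! h
      have := hσ.inv.eq_one_or_eq_of_forall_apply_eq_self_or_eq
        (by rwa [Equiv.Perm.support_inv]) fun i => or_iff_not_imp_left.mpr (h i)
      tauto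
    refine smul_eq_zero_of_right _ (Finset.prod_eq_zero (Finset.mem_univ i) ?_)
    rw [charmatrix_apply_ne _ _ _ hi₁, diagonal_mul_permMatrix_apply, if_neg, C_0, neg_zero]
    exact fun h => hi₂ (Equiv.Perm.eq_inv_iff_eq.mpr h)

end Matrix

def gammaMatrix (R : Type*) [Ring R] : Matrix (Fin 6) (Fin 6) R :=
  !![0, 0, 1, 0, 0, 0;
     0, 0, 0, 1, 0, 0;
     0, 0, 0, 0, 1, 0;
     0, 0, 0, 0, 0, 1;
     0, -1, 0, 0, 0, 0;
     1, 0, 0, 0, 0, 0]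

def gammaPerm : Equiv.Perm (Fin 6) := List.formPerm [0, 2, 4, 1, 3, 5]

theorem isCycle_gammaPerm : gammaPerm.IsCycle :=
  List.isCycle_formPerm (by decide) (by decide)

theorem support_gammaPerm : gammaPerm.support = Finset.univ :=
  (List.support_formPerm_of_nodup _ (by decide) (by decide)).trans (by decide)

theorem gammaPerm_apply (i : Fin 6) : gammaPerm i = ![2, 3, 4, 5, 1, 0] i := by
  fin_cases i <;> rfl

theorem gammaPerm_inv_apply (i : Fin 6) : gammaPerm⁻¹ i = ![5, 4, 0, 1, 2, 3] i := by
  fin_cases i <;> rfl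

variable {R : Type*} [Ring R]

theorem gammaMatrix_eq_diagonal_mul_permMatrix :
    gammaMatrix R = diagonal ![1, 1, 1, 1, -1, 1] * gammaPerm.permMatrix R := by
  ext i j
  rw [diagonal_mul_permMatrix_apply, gammaPerm_apply]
  fin_cases i <;> fin_cases j <;> simp [gammaMatrix]

theorem gammaMatrix_pow_five_eq_diagonal_mul_permMatrix :
    gammaMatrix R ^ 5 = diagonal ![-1, 1, -1, -1, -1, -1] * gammaPerm⁻¹.permMatrix R := by
  ext i j
  rw [diagonal_mul_permMatrix_apply, gammaPerm_inv_apply]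
  fin_cases i <;> fin_cases j <;> simp [gammaMatrix, pow_succ, mul_apply, Fin.sum_univ_six]

/-- For `u₁, u₂, u₃` on the unit circle, the characteristic polynomials of
`D(u₁,u₂,u₃)·γ` and `D(u₁,u₂,u₃)·γ⁵` are both `X⁶ + 1`. -/
theorem charpoly_component_one_and_five (u₁ u₂ u₃ : ℂ)
    (h₁ : ‖u₁‖ = 1) (h₂ : ‖u₂‖ = 1) (h₃ : ‖u₃‖ = 1) :
    let γ : Matrix (Fin 6) (Fin 6) ℂ :=
      !![0, 0, 1, 0, 0, 0;
         0, 0, 0, 1, 0, 0;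
         0, 0, 0, 0, 1, 0;
         0, 0, 0, 0, 0, 1;
         0, -1, 0, 0, 0, 0;
         1, 0, 0, 0, 0, 0]
    let D : Matrix (Fin 6) (Fin 6) ℂ :=
      Matrix.diagonal ![u₁, starRingEnd ℂ u₁, u₂, starRingEnd ℂ u₂, u₃, starRingEnd ℂ u₃]
    (D * γ).charpoly = X ^ 6 + 1 ∧ (D * γ ^ 5).charpoly = X ^ 6 + 1 := by
  intro γ D
  have hD : ∏ i, ![u₁, starRingEnd ℂ u₁, u₂, starRingEnd ℂ u₂, u₃, starRingEnd ℂ u₃] i = 1 := by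
    have hconj {u : ℂ} (hu : ‖u‖ = 1) : u * starRingEnd ℂ u = 1 := by
      rw [Complex.mul_conj', hu]; norm_num
    simp only [Fin.prod_univ_succ, Fin.prod_univ_zero, cons_val_zero, cons_val_succ]
    linear_combination (u₂ * starRingEnd ℂ u₂ * u₃ * starRingEnd ℂ u₃) * hconj h₁ +
      (u₃ * starRingEnd ℂ u₃) * hconj h₂ + hconj h₃
  have charpoly_D_mul (s : Fin 6 → ℂ) (hs : ∏ i, s i = -1) {σ : Equiv.Perm (Fin 6)}
      (hσ : σ.IsCycle) (hsupp : σ.support = Finset.univ) :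
      (D * (diagonal s * σ.permMatrix ℂ)).charpoly = X ^ 6 + 1 := by
    rw [← mul_assoc, diagonal_mul_diagonal, charpoly_diagonal_mul_permMatrix_of_isCycle _ hσ hsupp,
      Finset.prod_mul_distrib, hD, hs, Fintype.card_fin]
    simp
  constructor
  · rw [show γ = gammaMatrix ℂ from rfl, gammaMatrix_eq_diagonal_mul_permMatrix]
    exact charpoly_D_mul _ (by simp [Fin.prod_univ_six]) isCycle_gammaPerm support_gammaPerm
  · rw [show γ = gammaMatrix ℂ from rfl, gammaMatrix_pow_five_eq_diagonal_mul_permMatrix]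
    exact charpoly_D_mul _ (by simp [Fin.prod_univ_six]) isCycle_gammaPerm.inv
      (by rw [Equiv.Perm.support_inv, support_gammaPerm])
end

section
/- Let γ be the 6×6 complex matrix with entries γ₁₃ = γ₂₄ = γ₃₅ = γ₄₆ = γ₆₁ = 1, γ₅₂ = −1, and all other entries 0. For all complex numbers u₁, u₂, u₃ of absolute value 1, the characteristic polynomial of D(u₁,u₂,u₃)·γ³ equals (X² + 1)³, where D(u₁,u₂,u₃) = diag(u₁, ū₁, u₂, ū₂, u₃, ū₃). -/
/-!
`γ³` is block diagonal with three copies of the rotation `!![0, -1; 1, 0]`, and `D` is block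
diagonal with blocks `diag(u, ū)`. Hence `D γ³` is block diagonal with blocks `!![0, -u; ū, 0]`,
each of characteristic polynomial `X² + u ū = X² + 1`.
-/

open Matrix Polynomial

namespace Matrix

variable {R n o : Type*} [CommRing R] [Fintype n] [DecidableEq n] [Fintype o] [DecidableEq o]

theorem charmatrix_blockDiagonal (M : o → Matrix n n R) :
    charmatrix (blockDiagonal M) = blockDiagonal fun k => charmatrix (M k) := by
  ext ⟨i, k⟩ ⟨j, k'⟩
  by_cases hk : k = k' <;> by_cases hi : i = j <;> simp [blockDiagonal_apply, hk, hi]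

theorem charpoly_blockDiagonal (M : o → Matrix n n R) :
    (blockDiagonal M).charpoly = ∏ k, (M k).charpoly := by
  simp only [charpoly, charmatrix_blockDiagonal, det_blockDiagonal]

theorem charpoly_fin_two_antidiagonal (a b : R) :
    (!![0, a; b, 0] : Matrix (Fin 2) (Fin 2) R).charpoly = X ^ 2 - C (a * b) := by
  rw [charpoly, det_fin_two]
  simp [C_mul]
  ring

end Matrix

/-- `(i, k) ↦ 2k + i`: the `k`-th `2 × 2` diagonal block sits at indices `2k, 2k + 1`. -/
def finTwoBlocksEquiv : Fin 2 × Fin 3 ≃ Fin 6 :=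
  (Equiv.prodComm (Fin 2) (Fin 3)).trans finProdFinEquiv

/-- For `u₁, u₂, u₃` on the unit circle, the characteristic polynomial of
`D(u₁,u₂,u₃)·γ³` is `(X² + 1)³`. -/
theorem charpoly_component_three (u₁ u₂ u₃ : ℂ)
    (h₁ : ‖u₁‖ = 1) (h₂ : ‖u₂‖ = 1) (h₃ : ‖u₃‖ = 1) :
    let γ : Matrix (Fin 6) (Fin 6) ℂ :=
      !![0, 0, 1, 0, 0, 0;
         0, 0, 0, 1, 0, 0;
         0, 0, 0, 0, 1, 0;
         0, 0, 0, 0, 0, 1;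
         0, -1, 0, 0, 0, 0;
         1, 0, 0, 0, 0, 0]
    let D : Matrix (Fin 6) (Fin 6) ℂ :=
      Matrix.diagonal ![u₁, starRingEnd ℂ u₁, u₂, starRingEnd ℂ u₂, u₃, starRingEnd ℂ u₃]
    (D * γ ^ 3).charpoly = (X ^ 2 + 1) ^ 3 := by
  intro γ D
  set u : Fin 3 → ℂ := ![u₁, u₂, u₃]
  let e := finTwoBlocksEquiv
  have hγ : γ ^ 3 = reindex e e (blockDiagonal fun _ => !![0, -1; 1, 0]) := by
    ext i j
    fin_cases i <;> fin_cases j <;> simp [γ, e, pow_succ, mul_apply, Fin.sum_univ_succ] <;> rfl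
  have hD : D = reindex e e (blockDiagonal fun k => diagonal ![u k, starRingEnd ℂ (u k)]) := by
    ext i j
    fin_cases i <;> fin_cases j <;> simp [D, e, u] <;> rfl
  have hblock (k : Fin 3) : diagonal ![u k, starRingEnd ℂ (u k)] * !![0, -1; 1, 0] =
      !![0, -u k; starRingEnd ℂ (u k), 0] := by
    ext i j
    fin_cases i <;> fin_cases j <;> simp
  have hunit (k : Fin 3) : u k * starRingEnd ℂ (u k) = 1 := by
    fin_cases k <;> simp [u, Complex.mul_conj', h₁, h₂, h₃]
  rw [hD, hγ, reindex_apply, reindex_apply, submatrix_mul_equiv, ← reindex_apply,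
    ← blockDiagonal_mul, charpoly_reindex, charpoly_blockDiagonal]
  simp [hblock, charpoly_fin_two_antidiagonal, hunit]
end

section
/- Let M be the square matrix over ℚ whose rows and columns are indexed by the unit group (ℤ/9ℤ)* (a set of 6 elements), with entry M(a,c) = 1 if a·c⁻¹ ∈ {2, 4, 8} and M(a,c) = 0 otherwise. Then the rank of M equals 4. -/
/-!
Since 2 generates `(ℤ/9ℤ)*` and `4 = 2²`, `8 = 2³`, indexing the units by `2ᵏ` turns `M` into the
circulant matrix of `x + x² + x³` in `ℚ[x]/(x⁶ - 1)`. It kills the circulant matrix of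
`(1 - x)(1 + x³) = (x⁶ - 1)/(x² + x + 1)`, which has rank 2, so its rank is at most 4; a unitriangular
`4 × 4` minor shows that it is at least 4. (In general the rank of the circulant matrix of `p` is
6 minus the number of sixth roots of unity at which `p` vanishes; here `x(1 + x + x²)` vanishes at the
two primitive cube roots of unity.)
-/

open Matrix

theorem pow_mul_inv_pow_eq_pow_sub {G : Type*} [Group G] {g : G} {n : ℕ} [NeZero n]
    (hg : g ^ n = 1) (i j : Fin n) : g ^ (i : ℕ) * (g ^ (j : ℕ))⁻¹ = g ^ ((i - j : Fin n) : ℕ) := by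
  rw [mul_inv_eq_iff_eq_mul, ← pow_add, pow_eq_pow_mod ((i - j : Fin n) + (j : ℕ)) hg,
    ← Fin.val_add, sub_add_cancel]

namespace Matrix

theorem submatrix_pow_of_mul_inv_eq_circulant {G α : Type*} [Group G] {g : G} {n : ℕ} [NeZero n]
    (hg : g ^ n = 1) (f : G → α) :
    (of fun a c => f (a * c⁻¹)).submatrix (fun i : Fin n => g ^ (i : ℕ))
      (fun j : Fin n => g ^ (j : ℕ)) =
      circulant fun k : Fin n => f (g ^ (k : ℕ)) := by
  ext i j
  simp [circulant_apply, pow_mul_inv_pow_eq_pow_sub hg]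

theorem card_le_rank_of_det_submatrix_ne_zero {m n k K : Type*} [Fintype n] [Fintype k]
    [DecidableEq k] [CommRing K] [IsDomain K] (A : Matrix m n K) (r : k → m) (c : k → n)
    (h : (A.submatrix r c).det ≠ 0) : Fintype.card k ≤ A.rank :=
  (rank_of_det_ne_zero h).symm.trans_le (rank_submatrix_le A r c)

end Matrix

/-- The coefficients of `x + x² + x³`. -/
def cmTypeVector : Fin 6 → ℚ := ![0, 1, 1, 1, 0, 0]

/-- The coefficients of `(1 - x)(1 + x³)`. -/
def cmTypeAnnihilator : Fin 6 → ℚ := ![1, -1, 0, 1, -1, 0]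

theorem circulant_cmTypeVector_mul_circulant_cmTypeAnnihilator :
    circulant cmTypeVector * circulant cmTypeAnnihilator = 0 := by
  -- `(x + x² + x³)(1 - x)(1 + x³) = x(1 - x⁶)`
  have hvec : circulant cmTypeVector *ᵥ cmTypeAnnihilator = 0 := by
    ext i
    fin_cases i <;>
      simp [cmTypeVector, cmTypeAnnihilator, mulVec, dotProduct, Fin.sum_univ_six, circulant_apply]
  rw [circulant_mul, hvec, circulant_zero]

theorem four_le_rank_circulant_cmTypeVector : 4 ≤ (circulant cmTypeVector).rank := by
  have hminor : (circulant cmTypeVector).submatrix ![1, 2, 3, 4] ![0, 1, 2, 3] =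
      !![1, 0, 0, 0; 1, 1, 0, 0; 1, 1, 1, 0; 0, 1, 1, 1] := by
    ext i j
    fin_cases i <;> fin_cases j <;> rfl
  simpa using card_le_rank_of_det_submatrix_ne_zero (circulant cmTypeVector)
    ![1, 2, 3, 4] ![0, 1, 2, 3] (by simp [hminor, det_succ_row_zero, Fin.sum_univ_succ])

theorem two_le_rank_circulant_cmTypeAnnihilator : 2 ≤ (circulant cmTypeAnnihilator).rank := by
  have hminor : (circulant cmTypeAnnihilator).submatrix ![0, 1] ![0, 1] = !![1, 0; -1, 1] := by
    ext i j
    fin_cases i <;> fin_cases j <;> rfl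
  simpa using card_le_rank_of_det_submatrix_ne_zero (circulant cmTypeAnnihilator)
    ![0, 1] ![0, 1] (by simp [hminor])

theorem rank_circulant_cmTypeVector : (circulant cmTypeVector).rank = 4 := by
  have hsum := rank_add_rank_le_card_of_mul_eq_zero
    circulant_cmTypeVector_mul_circulant_cmTypeAnnihilator
  rw [Fintype.card_fin] at hsum
  have := four_le_rank_circulant_cmTypeVector
  have := two_le_rank_circulant_cmTypeAnnihilator
  omega

/-- The matrix over `ℚ` indexed by `(ℤ/9ℤ)*` with entry `1` at `(a, c)` when
`a·c⁻¹ ∈ {2, 4, 8}` and `0` otherwise has rank `4`. -/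
theorem cm_type_matrix_rank :
    let M : Matrix (ZMod 9)ˣ (ZMod 9)ˣ ℚ :=
      Matrix.of fun a c =>
        if ((a * c⁻¹ : (ZMod 9)ˣ) : ZMod 9) ∈ ({2, 4, 8} : Set (ZMod 9)) then 1 else 0
    M.rank = 4 := by
  intro M
  let g : (ZMod 9)ˣ := ZMod.unitOfCoprime 2 (by norm_num)
  have hg : g ^ 6 = 1 := by decide
  let e : Fin 6 ≃ (ZMod 9)ˣ := Equiv.ofBijective (fun k => g ^ (k : ℕ))
    ((Fintype.bijective_iff_injective_and_card _).2 ⟨by decide, by decide⟩)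
  let f : (ZMod 9)ˣ → ℚ := fun x => if (x : ZMod 9) ∈ ({2, 4, 8} : Set (ZMod 9)) then 1 else 0
  have hM : M.submatrix e e = circulant fun k : Fin 6 => f (g ^ (k : ℕ)) :=
    submatrix_pow_of_mul_inv_eq_circulant hg f
  have hf : (fun k : Fin 6 => f (g ^ (k : ℕ))) = cmTypeVector := by
    funext k
    fin_cases k <;> simp +decide [f, g, cmTypeVector]
  rw [← rank_submatrix M e e, hM, hf, rank_circulant_cmTypeVector]
end

section
/- Let K = ℚ(ζ) be the 9th cyclotomic field where ζ is a primitive 9th root of unity, let 𝒪 be its ring of integers, and let 𝔪 be the ideal of 𝒪 generated by (1 + ζ + ζ⁴)⁴. Set ε₀ = −ζ², ε₁ = ζ⁴ − ζ³ + ζ, ε₂ = ζ⁵ + ζ² − ζ. Then for integers a, b, c, one has ε₀^a ε₁^b ε₂^c ≡ 1 (mod 𝔪) if and only if there exists an integer k such that a ≡ 2k (mod 18), b ≡ k (mod 9), and c ≡ 2k (mod 3). -/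
/-!
Reduction modulo `(ζ - 1)⁴` maps `𝒪` onto `𝔽₃[t]/(t⁴)` with `ζ ↦ 1 + t`, and its kernel is
exactly `𝔪`: the ideal `(ζ - 1)⁴` contains `3`, because `3` is totally ramified, and
`1 + ζ + ζ⁴ = 1 - ζ⁷` is associated to `ζ - 1`. Realising `𝔽₃[t]/(t⁴)` by `4 × 4` matrices makes
the unit group computable: the images of `ε₀` and `ε₂` generate independent cyclic groups of
orders `18` and `3`, and `ε₀² ε₁ ε₂² ↦ 1`. Hence `ε₀^a ε₁^b ε₂^c ≡ 1 (mod 𝔪)` exactly when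
`18 ∣ a - 2b` and `3 ∣ c - 2b`.
-/

open NumberField Polynomial

lemma zpow_mul_zpow_mul_zpow_eq {G : Type*} [CommGroup G] (x y z : G) (a b c : ℤ) :
    x ^ a * y ^ b * z ^ c = x ^ (a - 2 * b) * z ^ (c - 2 * b) * (x ^ 2 * y * z ^ 2) ^ b := by
  conv_lhs => rw [← sub_add_cancel a (2 * b), ← sub_add_cancel c (2 * b), zpow_add, zpow_add]
  rw [mul_zpow, mul_zpow, ← zpow_natCast, ← zpow_natCast, ← zpow_mul, ← zpow_mul]
  push_cast
  simp only [mul_comm, mul_left_comm, mul_assoc]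

lemma zpow_mul_zpow_eq_one_iff {G : Type*} [Group G] {x z : G} {m n : ℕ} (hm : 0 < m)
    (hn : 0 < n) (hx : x ^ m = 1) (hz : z ^ n = 1)
    (hindep : ∀ i < m, ∀ j < n, x ^ i * z ^ j = 1 → i = 0 ∧ j = 0) (i j : ℤ) :
    x ^ i * z ^ j = 1 ↔ (m : ℤ) ∣ i ∧ (n : ℤ) ∣ j := by
  obtain ⟨i', hi'⟩ := Int.eq_ofNat_of_zero_le (Int.emod_nonneg i (by omega : (m : ℤ) ≠ 0))
  obtain ⟨j', hj'⟩ := Int.eq_ofNat_of_zero_le (Int.emod_nonneg j (by omega : (n : ℤ) ≠ 0))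
  have hi_lt : i' < m := by have := Int.emod_lt_of_pos i (by omega : (0 : ℤ) < m); omega
  have hj_lt : j' < n := by have := Int.emod_lt_of_pos j (by omega : (0 : ℤ) < n); omega
  rw [zpow_eq_zpow_emod' i hx, zpow_eq_zpow_emod' j hz, hi', hj', zpow_natCast, zpow_natCast,
    Int.dvd_iff_emod_eq_zero, Int.dvd_iff_emod_eq_zero, hi', hj', Nat.cast_eq_zero,
    Nat.cast_eq_zero]
  constructor
  · exact hindep i' hi_lt j' hj_lt
  · rintro ⟨rfl, rfl⟩
    rw [pow_zero, pow_zero, one_mul]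

lemma exists_modEq_two_mul_iff (a b c : ℤ) :
    (∃ k : ℤ, a ≡ 2 * k [ZMOD 18] ∧ b ≡ k [ZMOD 9] ∧ c ≡ 2 * k [ZMOD 3]) ↔
      (18 : ℤ) ∣ a - 2 * b ∧ (3 : ℤ) ∣ c - 2 * b := by
  simp only [Int.ModEq]
  constructor
  · rintro ⟨k, h18, h9, h3⟩
    omega
  · rintro ⟨h18, h3⟩
    exact ⟨b, by omega, rfl, by omega⟩

namespace IsPrimitiveRoot

section Domain

variable {R : Type*} [CommRing R] [IsDomain R] {ζ : R}

lemma pow_six_add_pow_three_add_one (hζ : IsPrimitiveRoot ζ 9) : ζ ^ 6 + ζ ^ 3 + 1 = 0 := by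
  have h3 : ζ ^ 3 - 1 ≠ 0 :=
    sub_ne_zero.mpr (hζ.pow_ne_one_of_pos_of_lt (by norm_num) (by norm_num))
  refine (mul_eq_zero.mp ?_).resolve_left h3
  linear_combination hζ.pow_eq_one

/-- `1 + ζ + ζ⁴ = 1 - ζ⁷`, and `ζ⁷` is again a primitive 9th root of unity. -/
lemma associated_sub_one_one_add_self_add_pow_four (hζ : IsPrimitiveRoot ζ 9) :
    Associated (ζ - 1) (1 + ζ + ζ ^ 4) := by
  have h : 1 + ζ + ζ ^ 4 = -(ζ ^ 7 - 1) := by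
    linear_combination ζ * hζ.pow_six_add_pow_three_add_one
  rw [h]
  exact (hζ.associated_sub_one_pow_sub_one_of_coprime (by norm_num)).neg_right

end Domain

section RingOfIntegers

variable {K : Type*} [Field K] {n : ℕ} {ζ : 𝓞 K}

lemma coe_ringOfIntegers (hζ : IsPrimitiveRoot ζ n) : IsPrimitiveRoot (ζ : K) n :=
  hζ.map_of_injective RingOfIntegers.coe_injective

lemma integralPowerBasis_coe_gen [CharZero K] [NeZero n] [IsCyclotomicExtension {n} ℚ K]
    (hζ : IsPrimitiveRoot ζ n) : hζ.coe_ringOfIntegers.integralPowerBasis.gen = ζ := by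
  rw [integralPowerBasis_gen, toInteger_coe]

lemma subOneIntegralPowerBasis_coe_gen [CharZero K] [NeZero n]
    [IsCyclotomicExtension {n} ℚ K]
    (hζ : IsPrimitiveRoot ζ n) : hζ.coe_ringOfIntegers.subOneIntegralPowerBasis.gen = ζ - 1 := by
  rw [subOneIntegralPowerBasis_gen]
  rfl

lemma minpoly_int_eq_cyclotomic [CharZero K] (hζ : IsPrimitiveRoot ζ n) (hn : 0 < n) :
    minpoly ℤ ζ = cyclotomic n ℤ := by
  rw [← minpoly.algebraMap_eq RingOfIntegers.coe_injective ζ,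
    ← cyclotomic_eq_minpoly hζ.coe_ringOfIntegers hn]

end RingOfIntegers

end IsPrimitiveRoot

namespace Cyclotomic9

/-- Multiplication by `t` on `𝔽₃[t]/(t⁴)` in the basis `1, t, t², t³`; the matrices
`p(shift)` form a copy of `𝔽₃[t]/(t⁴)` in which `decide` can compute. -/
def shift : Matrix (Fin 4) (Fin 4) (ZMod 3) :=
  !![0, 1, 0, 0; 0, 0, 1, 0; 0, 0, 0, 1; 0, 0, 0, 0]

lemma shift_pow_four : shift ^ 4 = 0 := by decide

lemma shift_pow_apply_zero (i : ℕ) (j : Fin 4) : (shift ^ i) 0 j = if i = j then 1 else 0 := by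
  rcases lt_or_ge i 4 with hi | hi
  · have h : ∀ i j : Fin 4, (shift ^ (i : ℕ)) 0 j = if (i : ℕ) = j then 1 else 0 := by decide
    exact h ⟨i, hi⟩ j
  · rw [← Nat.sub_add_cancel hi, pow_add, shift_pow_four, mul_zero, if_neg (by omega),
      Matrix.zero_apply]

lemma aeval_cyclotomic_nine : aeval (1 + shift) (cyclotomic 9 ℤ) = 0 := by
  rw [show 9 = 3 ^ (1 + 1) by rfl, cyclotomic_prime_pow_eq_geom_sum Nat.prime_three]
  simp only [map_pow, map_add, map_one, aeval_X, Finset.sum_range_succ,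
    Finset.sum_range_zero, zero_add, pow_zero, pow_one]
  decide

lemma eq_zero_and_eq_zero_of_pow_mul_pow_eq_one :
    ∀ i < 18, ∀ j < 3, (-(1 + shift) ^ 2) ^ i *
      ((1 + shift) ^ 5 + (1 + shift) ^ 2 - (1 + shift)) ^ j = 1 → i = 0 ∧ j = 0 := by
  decide

variable {K : Type*} [Field K] [NumberField K] [IsCyclotomicExtension {9} ℚ K] {ζ : 𝓞 K}

/-- `3` is totally ramified: `(3) = (ζ - 1)⁶`. -/
lemma three_mem_span_sub_one_pow (hζ : IsPrimitiveRoot ζ 9) :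
    (3 : 𝓞 K) ∈ Ideal.span {(ζ - 1) ^ 4} := by
  have : Fact (Nat.Prime 3) := ⟨Nat.prime_three⟩
  have : IsCyclotomicExtension {3 ^ (1 + 1)} ℚ K := ‹IsCyclotomicExtension {9} ℚ K›
  have h := IsCyclotomicExtension.Rat.map_eq_span_zeta_sub_one_pow 3 1 hζ.coe_ringOfIntegers
  rw [IsCyclotomicExtension.Rat.finrank 9 K, Ideal.span_singleton_pow] at h
  have h3 : (3 : 𝓞 K) ∈ Ideal.span {(ζ - 1) ^ Nat.totient 9} := by
    rw [show Ideal.span {(ζ - 1) ^ Nat.totient 9} = _ from h.symm]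
    simpa using Ideal.mem_map_of_mem (algebraMap ℤ (𝓞 K)) (Ideal.mem_span_singleton_self (3 : ℤ))
  exact Ideal.span_singleton_le_span_singleton.mpr (pow_dvd_pow _ (by decide)) h3

/-- `𝒪 → 𝒪/(ζ - 1)⁴ ≅ 𝔽₃[t]/(t⁴)`, `ζ ↦ 1 + t`. -/
noncomputable def reduceMod (hζ : IsPrimitiveRoot ζ 9) :
    𝓞 K →ₐ[ℤ] Matrix (Fin 4) (Fin 4) (ZMod 3) :=
  hζ.coe_ringOfIntegers.integralPowerBasis.lift (1 + shift) (by
    rw [hζ.integralPowerBasis_coe_gen, hζ.minpoly_int_eq_cyclotomic (by norm_num)]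
    exact aeval_cyclotomic_nine)

lemma reduceMod_zeta (hζ : IsPrimitiveRoot ζ 9) : reduceMod hζ ζ = 1 + shift :=
  calc reduceMod hζ ζ = reduceMod hζ hζ.coe_ringOfIntegers.integralPowerBasis.gen :=
        congrArg _ hζ.integralPowerBasis_coe_gen.symm
    _ = 1 + shift := PowerBasis.lift_gen _ _ _

lemma reduceMod_sub_one (hζ : IsPrimitiveRoot ζ 9) : reduceMod hζ (ζ - 1) = shift := by
  rw [map_sub, map_one, reduceMod_zeta, add_sub_cancel_left]

/-- Write `x = ∑ cᵢ (ζ - 1)ⁱ`; the first row of `reduceMod x` is `(c₀, c₁, c₂, c₃) mod 3`. -/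
lemma mem_span_sub_one_pow_iff (hζ : IsPrimitiveRoot ζ 9) (x : 𝓞 K) :
    x ∈ Ideal.span {(ζ - 1) ^ 4} ↔ reduceMod hζ x = 0 := by
  constructor
  · intro hx
    obtain ⟨y, rfl⟩ := Ideal.mem_span_singleton'.mp hx
    rw [map_mul, map_pow, reduceMod_sub_one, shift_pow_four, mul_zero]
  intro hx
  set pb := hζ.coe_ringOfIntegers.subOneIntegralPowerBasis
  set c := pb.basis.repr x
  have hx_sum : x = ∑ i, c i • (ζ - 1) ^ (i : ℕ) := by
    rw [← hζ.subOneIntegralPowerBasis_coe_gen]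
    simpa only [pb.coe_basis] using (pb.basis.sum_repr x).symm
  have hc : ∀ i : Fin pb.dim, (i : ℕ) < 4 → (3 : ℤ) ∣ c i := by
    intro i hi
    have h := congrFun (congrFun hx 0) ⟨i, hi⟩
    rw [hx_sum] at h
    simp only [map_sum, map_zsmul, map_pow, reduceMod_sub_one, Matrix.sum_apply,
      Matrix.smul_apply, shift_pow_apply_zero, Matrix.zero_apply] at h
    simp only [Fin.val_inj, smul_ite, smul_zero, Finset.sum_ite_eq', Finset.mem_univ, if_true,
      zsmul_eq_mul, mul_one] at h
    exact (ZMod.intCast_zmod_eq_zero_iff_dvd (c i) 3).mp h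
  rw [hx_sum]
  refine Ideal.sum_mem _ fun i _ => ?_
  rw [zsmul_eq_mul]
  by_cases hi : (i : ℕ) < 4
  · obtain ⟨d, hd⟩ := hc i hi
    rw [hd, Int.cast_mul, mul_assoc]
    exact Ideal.mul_mem_right _ _ (by exact_mod_cast three_mem_span_sub_one_pow hζ)
  · exact Ideal.mul_mem_left _ _ (Ideal.mem_span_singleton.mpr (pow_dvd_pow _ (not_lt.mp hi)))

lemma sub_one_mem_span_iff (hζ : IsPrimitiveRoot ζ 9) (u : (𝓞 K)ˣ) :
    (u : 𝓞 K) - 1 ∈ Ideal.span {(1 + ζ + ζ ^ 4) ^ 4} ↔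
      Units.map (reduceMod hζ : 𝓞 K →* Matrix (Fin 4) (Fin 4) (ZMod 3)) u = 1 := by
  rw [Ideal.span_singleton_eq_span_singleton.mpr
      (hζ.associated_sub_one_one_add_self_add_pow_four.pow_pow (n := 4)).symm,
    mem_span_sub_one_pow_iff hζ, map_sub, map_one, sub_eq_zero, Units.ext_iff]
  rfl

end Cyclotomic9

open Cyclotomic9

/-- In the ring of integers of the 9th cyclotomic field, with
`ε₀ = −ζ²`, `ε₁ = ζ⁴ − ζ³ + ζ`, `ε₂ = ζ⁵ + ζ² − ζ` and
`𝔪 = ((1 + ζ + ζ⁴)⁴)`, for integers `a, b, c` one has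
`ε₀^a ε₁^b ε₂^c ≡ 1 (mod 𝔪)` iff there is `k ∈ ℤ` with
`a ≡ 2k (mod 18)`, `b ≡ k (mod 9)`, `c ≡ 2k (mod 3)`. -/
theorem unit_product_congruent_one_iff
    (K : Type*) [Field K] [NumberField K] [IsCyclotomicExtension {9} ℚ K]
    (ζ : 𝓞 K) (hζ : IsPrimitiveRoot ζ 9)
    (ε₀ ε₁ ε₂ : (𝓞 K)ˣ)
    (hε₀ : (ε₀ : 𝓞 K) = -ζ ^ 2)
    (hε₁ : (ε₁ : 𝓞 K) = ζ ^ 4 - ζ ^ 3 + ζ)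
    (hε₂ : (ε₂ : 𝓞 K) = ζ ^ 5 + ζ ^ 2 - ζ)
    (a b c : ℤ) :
    ((ε₀ ^ a * ε₁ ^ b * ε₂ ^ c : (𝓞 K)ˣ) : 𝓞 K) - 1
        ∈ Ideal.span {(1 + ζ + ζ ^ 4) ^ 4}
      ↔ ∃ k : ℤ, a ≡ 2 * k [ZMOD 18] ∧ b ≡ k [ZMOD 9] ∧ c ≡ 2 * k [ZMOD 3] := by
  rw [sub_one_mem_span_iff hζ, exists_modEq_two_mul_iff]
  set φ := Units.map (reduceMod hζ : 𝓞 K →* Matrix (Fin 4) (Fin 4) (ZMod 3))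
  have hφ₀ : (φ ε₀ : Matrix (Fin 4) (Fin 4) (ZMod 3)) = -(1 + shift) ^ 2 := by
    simp [φ, hε₀, reduceMod_zeta]
  have hφ₁ : (φ ε₁ : Matrix (Fin 4) (Fin 4) (ZMod 3)) =
      (1 + shift) ^ 4 - (1 + shift) ^ 3 + (1 + shift) := by
    simp [φ, hε₁, reduceMod_zeta]
  have hφ₂ : (φ ε₂ : Matrix (Fin 4) (Fin 4) (ZMod 3)) =
      (1 + shift) ^ 5 + (1 + shift) ^ 2 - (1 + shift) := by
    simp [φ, hε₂, reduceMod_zeta]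
  have hrel : φ (ε₀ ^ 2 * ε₁ * ε₂ ^ 2) = 1 := by
    ext1
    simp only [map_mul, map_pow, Units.val_mul, Units.val_pow_eq_pow_val, hφ₀, hφ₁, hφ₂]
    decide
  have h18 : φ ε₀ ^ 18 = 1 := by ext1; rw [Units.val_pow_eq_pow_val, hφ₀]; decide
  have h3 : φ ε₂ ^ 3 = 1 := by ext1; rw [Units.val_pow_eq_pow_val, hφ₂]; decide
  have hindep : ∀ i < 18, ∀ j < 3, φ ε₀ ^ i * φ ε₂ ^ j = 1 → i = 0 ∧ j = 0 := fun i hi j hj h =>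
    eq_zero_and_eq_zero_of_pow_mul_pow_eq_one i hi j hj <| by
      simpa only [Units.ext_iff, Units.val_mul, Units.val_pow_eq_pow_val, Units.val_one, hφ₀,
        hφ₂] using h
  rw [zpow_mul_zpow_mul_zpow_eq, map_mul, map_mul, map_zpow, map_zpow, map_zpow, hrel, one_zpow,
    mul_one]
  exact zpow_mul_zpow_eq_one_iff (by norm_num) (by norm_num) h18 h3 hindep _ _
end

section
/- Let μ be the Haar probability measure on the 3-torus U(1)³, and for u = (u₁,u₂,u₃) ∈ U(1)³ write αᵢ = uᵢ + ūᵢ = 2 Re uᵢ. Define M(k) = binom(k, k/2) if k is even and M(k) = 0 if k is odd. Then for every natural number n, ∫_{U(1)³} (3 + α₁α₂ + α₂α₃ + α₁α₃)ⁿ dμ = Σ_{a+b+c+d=n} (n! / (a! b! c! d!)) · 3^a · M(b+d) · M(b+c) · M(c+d). In particular the values for n = 0,…,4 are 1, 3, 21, 183, 1845. -/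
/-!
Expand `a₂ⁿ = (3 + α₁α₂ + α₂α₃ + α₁α₃)ⁿ` by the multinomial theorem; the term indexed by
`(a, b, c, d)` is `3^a α₁^(b+d) α₂^(b+c) α₃^(c+d)`. Haar measure on `U(1)³` is the product of
the Haar measures of the factors, so its integral is `3^a M(b+d) M(b+c) M(c+d)`, where
`M(k) = ∫ (u + u⁻¹)^k du` is the constant term `binom(k, k/2)` of `(u + u⁻¹)^k`: all other
characters `u ↦ u^m` integrate to zero by translation invariance.
-/

open MeasureTheory Finset Nat

lemma Finset.sum_piAntidiag_univ_fin_four {M : Type*} [AddCommMonoid M] (n : ℕ)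
    (F : ℕ → ℕ → ℕ → ℕ → M) :
    ∑ k ∈ piAntidiag (univ : Finset (Fin 4)) n, F (k 0) (k 1) (k 2) (k 3)
      = ∑ a ∈ range (n + 1), ∑ b ∈ range (n + 1), ∑ c ∈ range (n + 1),
          ∑ d ∈ range (n + 1), if a + b + c + d = n then F a b c d else 0 := by
  simp only [← sum_product']
  rw [← sum_filter]
  refine sum_nbij' (fun k => (k 0, k 1, k 2, k 3)) (fun x => ![x.1, x.2.1, x.2.2.1, x.2.2.2])
    ?_ ?_ ?_ ?_ ?_
  · intro k hk
    simp [Fin.sum_univ_four] at hk ⊢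
    omega
  · intro x hx
    simp [Fin.sum_univ_four] at hx ⊢
    omega
  · intro k _
    ext i
    fin_cases i <;> rfl
  all_goals intros; rfl

lemma Nat.cast_multinomial_univ_fin_four {n : ℕ} {k : Fin 4 → ℕ}
    (hk : k ∈ piAntidiag univ n) :
    (multinomial univ k : ℝ) = n ! / ((k 0)! * (k 1)! * (k 2)! * (k 3)!) := by
  rw [mem_piAntidiag] at hk
  have h := multinomial_spec univ k
  rw [hk.1, Fin.prod_univ_four] at h
  rw [eq_div_iff (by positivity), ← h]
  push_cast
  ring

lemma MeasureTheory.integral_prod_prod_mul {𝕜 α β γ : Type*} [RCLike 𝕜] [MeasurableSpace α]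
    [MeasurableSpace β] [MeasurableSpace γ] (μ : Measure α) (ν : Measure β) (ρ : Measure γ)
    [SFinite μ] [SFinite ν] [SFinite ρ] (f : α → 𝕜) (g : β → 𝕜) (h : γ → 𝕜) :
    ∫ x, f x.1 * g x.2.1 * h x.2.2 ∂μ.prod (ν.prod ρ)
      = (∫ x, f x ∂μ) * (∫ y, g y ∂ν) * ∫ z, h z ∂ρ := by
  simp_rw [mul_assoc]
  rw [integral_prod_mul (f := f) (g := fun y : β × γ => g y.1 * h y.2), integral_prod_mul]

lemma three_add_mul_add_mul_add_mul_pow {R : Type*} [CommSemiring R] (x y z : R) (n : ℕ) :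
    (3 + x * y + y * z + x * z) ^ n
      = ∑ k ∈ piAntidiag (univ : Finset (Fin 4)) n, (multinomial univ k : R) * 3 ^ k 0
          * (x ^ (k 1 + k 3) * y ^ (k 1 + k 2) * z ^ (k 2 + k 3)) := by
  have h := sum_pow_eq_sum_piAntidiag univ ![3, x * y, y * z, x * z] n
  simp only [Fin.sum_univ_four, Fin.prod_univ_four, Matrix.cons_val] at h
  rw [h]
  refine sum_congr rfl fun k _ => ?_
  ring

lemma MeasureTheory.Measure.isProbabilityMeasure_haarMeasure_top {G : Type*} [Group G]
    [TopologicalSpace G] [IsTopologicalGroup G] [CompactSpace G] [MeasurableSpace G]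
    [BorelSpace G] :
    IsProbabilityMeasure (Measure.haarMeasure (⊤ : TopologicalSpace.PositiveCompacts G)) :=
  ⟨by rw [← TopologicalSpace.PositiveCompacts.coe_top, Measure.haarMeasure_self]⟩

def circleTraceMoment (k : ℕ) : ℝ := if Even k then (k.choose (k / 2) : ℝ) else 0

namespace Circle

lemma ofReal_two_mul_re (u : Circle) : ((2 * (u : ℂ).re : ℝ) : ℂ) = u + (u : ℂ)⁻¹ := by
  rw [← coe_inv, coe_inv_eq_conj, Complex.add_conj]

lemma add_inv_pow (u : Circle) (k : ℕ) : ((u : ℂ) + (u : ℂ)⁻¹) ^ k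
    = ∑ j ∈ range (k + 1), (k.choose j : ℂ) * (u : ℂ) ^ (2 * (j : ℤ) - k) := by
  rw [add_pow]
  refine sum_congr rfl fun j hj => ?_
  have hjk : j ≤ k := Nat.lt_succ_iff.mp (mem_range.mp hj)
  rw [inv_pow, ← zpow_natCast, ← zpow_natCast, ← zpow_neg, ← zpow_add₀ (coe_ne_zero u)]
  push_cast [hjk]
  ring_nf

variable [MeasurableSpace Circle] [BorelSpace Circle] (ν : Measure Circle)
  [IsProbabilityMeasure ν] [ν.IsMulLeftInvariant]

lemma integral_zpow (m : ℤ) : ∫ u, (u : ℂ) ^ m ∂ν = if m = 0 then 1 else 0 := by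
  split_ifs with hm
  · simp [hm]
  -- rotating by a `2m`-th root of unity negates `u ^ m`
  refine integral_eq_zero_of_mul_left_eq_neg (g := exp (Real.pi / m)) fun u => ?_
  have : ((exp (Real.pi / m) : Circle) : ℂ) ^ m = -1 := by
    rw [coe_exp, ← Complex.exp_int_mul]
    convert Complex.exp_pi_mul_I using 2
    push_cast
    field_simp
  rw [coe_mul, mul_zpow, this, neg_one_mul]

lemma integral_add_inv_pow (k : ℕ) :
    ∫ u, ((u : ℂ) + (u : ℂ)⁻¹) ^ k ∂ν = if Even k then (k.choose (k / 2) : ℂ) else 0 := by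
  have hint (j : ℕ) : Integrable (fun u : Circle => (u : ℂ) ^ (2 * (j : ℤ) - k)) ν := by
    have hcont : Continuous fun u : Circle => (u : ℂ) ^ (2 * (j : ℤ) - k) :=
      continuous_subtype_val.zpow₀ _ fun u => Or.inl (coe_ne_zero u)
    exact hcont.integrable_of_hasCompactSupport (.of_compactSpace _)
  have hcond (j : ℕ) : 2 * (j : ℤ) - k = 0 ↔ Even k ∧ j = k / 2 := by
    constructor
    · intro h; exact ⟨⟨j, by omega⟩, by omega⟩
    · rintro ⟨⟨t, rfl⟩, rfl⟩; omega
  simp_rw [add_inv_pow]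
  rw [integral_finsetSum _ fun j _ => (hint j).const_mul _]
  simp only [integral_const_mul, integral_zpow, hcond, mul_ite, mul_one, mul_zero, ite_and]
  split_ifs with hk
  · rw [sum_ite_eq', if_pos (mem_range.mpr (by omega))]
  · simp

lemma integral_two_mul_re_pow (k : ℕ) :
    ∫ u, (2 * (u : ℂ).re) ^ k ∂ν = circleTraceMoment k := by
  have h : ∫ u, (((2 * (u : ℂ).re) ^ k : ℝ) : ℂ) ∂ν
      = ((∫ u, (2 * (u : ℂ).re) ^ k ∂ν : ℝ) : ℂ) :=
    integral_ofReal
  simp only [Complex.ofReal_pow, ofReal_two_mul_re, integral_add_inv_pow] at h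
  unfold circleTraceMoment
  split_ifs at h ⊢ <;> exact_mod_cast h.symm

lemma integral_secondTrace_pow (n : ℕ) :
    ∫ u, (3 + 2 * (u.1 : ℂ).re * (2 * (u.2.1 : ℂ).re) + 2 * (u.2.1 : ℂ).re * (2 * (u.2.2 : ℂ).re)
        + 2 * (u.1 : ℂ).re * (2 * (u.2.2 : ℂ).re)) ^ n ∂ν.prod (ν.prod ν)
      = ∑ k ∈ piAntidiag (univ : Finset (Fin 4)) n, (multinomial univ k : ℝ) * 3 ^ k 0
          * (circleTraceMoment (k 1 + k 3) * circleTraceMoment (k 1 + k 2)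
            * circleTraceMoment (k 2 + k 3)) := by
  set α : Circle → ℝ := fun v => 2 * (v : ℂ).re
  have hmoment (m : ℕ) : ∫ v, α v ^ m ∂ν = circleTraceMoment m := integral_two_mul_re_pow ν m
  simp_rw [three_add_mul_add_mul_add_mul_pow]
  rw [integral_finsetSum]
  · refine sum_congr rfl fun k _ => ?_
    rw [integral_const_mul, integral_prod_prod_mul ν ν ν (f := fun v => α v ^ (k 1 + k 3))
      (g := fun v => α v ^ (k 1 + k 2)) (h := fun v => α v ^ (k 2 + k 3))]
    rw [hmoment, hmoment, hmoment]
  · intro k _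
    refine Continuous.integrable_of_hasCompactSupport ?_ (.of_compactSpace _)
    fun_prop

end Circle

/-- Moments of the second trace `a₂ = 3 + α₁α₂ + α₂α₃ + α₁α₃`
(with `αᵢ = uᵢ + ūᵢ = 2 Re uᵢ`) with respect to the Haar probability measure on
`U(1)³`: `∫ a₂ⁿ dμ = ∑_{a+b+c+d=n} n!/(a!b!c!d!) · 3^a · M(b+d)M(b+c)M(c+d)`,
where `M(k) = C(k, k/2)` for `k` even and `0` for `k` odd; the values for
`n = 0,…,4` are `1, 3, 21, 183, 1845`. -/
theorem second_trace_moments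
    [MeasurableSpace (Circle × Circle × Circle)]
    [BorelSpace (Circle × Circle × Circle)]
    (μ : Measure (Circle × Circle × Circle))
    [μ.IsHaarMeasure] [IsProbabilityMeasure μ] :
    let M : ℕ → ℝ := fun k => if Even k then (k.choose (k / 2) : ℝ) else 0
    let α₁ : Circle × Circle × Circle → ℝ := fun u => 2 * (u.1 : ℂ).re
    let α₂ : Circle × Circle × Circle → ℝ := fun u => 2 * (u.2.1 : ℂ).re
    let α₃ : Circle × Circle × Circle → ℝ := fun u => 2 * (u.2.2 : ℂ).re
    let a₂ : Circle × Circle × Circle → ℝ :=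
      fun u => 3 + α₁ u * α₂ u + α₂ u * α₃ u + α₁ u * α₃ u
    (∀ n : ℕ,
      ∫ u, (a₂ u) ^ n ∂μ
        = ∑ a ∈ Finset.range (n + 1), ∑ b ∈ Finset.range (n + 1),
            ∑ c ∈ Finset.range (n + 1), ∑ d ∈ Finset.range (n + 1),
            if a + b + c + d = n then
              (n.factorial : ℝ)
                  / ((a.factorial : ℝ) * b.factorial * c.factorial * d.factorial)
                * 3 ^ a * M (b + d) * M (b + c) * M (c + d)
            else 0) ∧
    (∫ u, (a₂ u) ^ 0 ∂μ) = 1 ∧ (∫ u, (a₂ u) ^ 1 ∂μ) = 3 ∧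
    (∫ u, (a₂ u) ^ 2 ∂μ) = 21 ∧ (∫ u, (a₂ u) ^ 3 ∂μ) = 183 ∧
    (∫ u, (a₂ u) ^ 4 ∂μ) = 1845 := by
  intro M α₁ α₂ α₃ a₂
  let : MeasurableSpace Circle := borel Circle
  have : BorelSpace Circle := ⟨rfl⟩
  obtain rfl : ‹MeasurableSpace (Circle × Circle × Circle)› = Prod.instMeasurableSpace :=
    BorelSpace.measurable_eq.trans (@BorelSpace.measurable_eq _ _ _ Prod.borelSpace).symm
  let ν : Measure Circle := Measure.haarMeasure ⊤
  have : IsProbabilityMeasure ν := Measure.isProbabilityMeasure_haarMeasure_top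
  obtain rfl : μ = ν.prod (ν.prod ν) := Measure.isHaarMeasure_eq_of_isProbabilityMeasure _ _
  have key (n : ℕ) : ∫ u, a₂ u ^ n ∂ν.prod (ν.prod ν)
      = ∑ a ∈ range (n + 1), ∑ b ∈ range (n + 1), ∑ c ∈ range (n + 1), ∑ d ∈ range (n + 1),
          if a + b + c + d = n then
            (n ! : ℝ) / ((a ! : ℝ) * b ! * c ! * d !) * 3 ^ a * M (b + d) * M (b + c) * M (c + d)
          else 0 := by
    rw [Circle.integral_secondTrace_pow, ← sum_piAntidiag_univ_fin_four]
    refine sum_congr rfl fun k hk => ?_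
    rw [Nat.cast_multinomial_univ_fin_four hk]
    simp only [circleTraceMoment, M, mul_assoc]
  refine ⟨key, ?_, ?_, ?_, ?_, ?_⟩ <;>
    rw [key] <;>
    simp only [M, sum_range_succ, sum_range_zero] <;>
    norm_num [Nat.factorial, Nat.even_iff, Nat.choose]
end
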